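/- arXiv:0909.1947 — 2 statements merged into one kernel-verified Lean document; each statement's English description precedes it below -/
import Mathlib

section
/- Let L, C₂, C₃ be plane curves in ℙ²(ℂ) defined by x = 0, xz − y² = 0, and (ax + 2by − z)(xz − y²) + x³ = 0 respectively, with (a + b²)² ≠ −4. Then the cubic C₃ is smooth. -/
/-- The cubic form `C₃ : (ax + 2by − z)(xz − y²) + x³` in ℙ²(ℂ). -/
noncomputable def cubicForm (a b x y z : ℂ) : ℂ :=
  (a * x + 2 * b * y - z) * (x * z - y ^ 2) + x ^ 3

/-!
Write `L = ax + 2by − z` and `Q = xz − y²`, so that `F = LQ + x³`. The combination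
`∂F/∂y + 2b ∂F/∂z = 2L(bx − y)` splits a singular point into two cases. If `L = 0`, the
`x`- and `z`-partials collapse to `x² = 0` and `y² = 0`, hence also `z = 0`. If `y = bx`
with `x ≠ 0`, the `z`-partial gives `2z = (a + 3b²)x`, and substituting into the
`x`-partial leaves `3((a + b²)² + 4)x² = 0`, excluded by the hypothesis.
-/

section

variable {K : Type*} [Field K]

theorem eq_zero_of_cubic_partials_of_linear_eq_zero (h3 : (3 : K) ≠ 0) {a b x y z : K}
    (hL : a * x + 2 * b * y - z = 0)
    (hx : a * (x * z - y ^ 2) + (a * x + 2 * b * y - z) * z + 3 * x ^ 2 = 0)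
    (hz : -(x * z - y ^ 2) + (a * x + 2 * b * y - z) * x = 0) :
    x = 0 ∧ y = 0 ∧ z = 0 := by
  have hx0 : x = 0 := by
    have : 3 * x ^ 2 = 0 := by linear_combination hx + a * hz - (a * x + z) * hL
    exact pow_eq_zero_iff two_ne_zero |>.mp ((mul_eq_zero.mp this).resolve_left h3)
  have hy0 : y = 0 := by
    have : y ^ 2 = 0 := by linear_combination hz + (2 * z - a * x - 2 * b * y) * hx0
    exact pow_eq_zero_iff two_ne_zero |>.mp this
  exact ⟨hx0, hy0, by linear_combination -hL + a * hx0 + 2 * b * hy0⟩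

theorem eq_zero_of_cubic_partials_of_eq_mul (h3 : (3 : K) ≠ 0) {a b x y z : K}
    (hab : (a + b ^ 2) ^ 2 ≠ -4) (hy : y = b * x)
    (hx : a * (x * z - y ^ 2) + (a * x + 2 * b * y - z) * z + 3 * x ^ 2 = 0)
    (hz : -(x * z - y ^ 2) + (a * x + 2 * b * y - z) * x = 0) :
    x = 0 ∧ y = 0 ∧ z = 0 := by
  subst hy
  by_cases hx0 : x = 0
  · subst hx0
    have : z ^ 2 = 0 := by linear_combination -hx
    exact ⟨rfl, by ring, pow_eq_zero_iff two_ne_zero |>.mp this⟩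
  have h2z : 2 * z = (a + 3 * b ^ 2) * x := by
    have : x * (2 * z - (a + 3 * b ^ 2) * x) = 0 := by linear_combination -hz
    linear_combination (mul_eq_zero.mp this).resolve_left hx0
  have hdisc : 3 * ((a + b ^ 2) ^ 2 + 4) * x ^ 2 = 0 := by
    linear_combination 4 * hx + 4 * a * hz + ((a - b ^ 2) * x + 2 * z) * h2z
  have h4 : (a + b ^ 2) ^ 2 + 4 ≠ 0 := fun h => hab (by linear_combination h)
  exact absurd hdisc (mul_ne_zero (mul_ne_zero h3 h4) (pow_ne_zero 2 hx0))

end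

/-- if `(a + b²)² ≠ −4` then the cubic `C₃` is smooth: its defining
form and all three partial derivatives have no common zero other than the origin. -/
theorem cubic_C3_smooth (a b : ℂ) (hab : (a + b ^ 2) ^ 2 ≠ -4) :
    ∀ x y z : ℂ, (x, y, z) ≠ (0, 0, 0) →
      ¬(cubicForm a b x y z = 0 ∧
        -- ∂/∂x
        a * (x * z - y ^ 2) + (a * x + 2 * b * y - z) * z + 3 * x ^ 2 = 0 ∧
        -- ∂/∂y
        2 * b * (x * z - y ^ 2) + (a * x + 2 * b * y - z) * (-2 * y) = 0 ∧
        -- ∂/∂z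
        -(x * z - y ^ 2) + (a * x + 2 * b * y - z) * x = 0) := by
  rintro x y z hne ⟨-, hx, hy, hz⟩
  have hsplit : (a * x + 2 * b * y - z) * (b * x - y) = 0 := by
    linear_combination hy / 2 + b * hz
  have hzero : x = 0 ∧ y = 0 ∧ z = 0 := by
    rcases mul_eq_zero.mp hsplit with hL | hline
    · exact eq_zero_of_cubic_partials_of_linear_eq_zero three_ne_zero hL hx hz
    · exact eq_zero_of_cubic_partials_of_eq_mul three_ne_zero hab (by linear_combination -hline) hx hz
  obtain ⟨rfl, rfl, rfl⟩ := hzero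
  exact hne rfl
end

section
/- The cubic curve in ℙ²(ℂ) defined by (ax + 2by − z)(xz − y²) + x³ = 0 is projectively equivalent to the cubic defined by y²z = x³ + (a + b²)x²z − xz². -/
/-- the cubic `(ax + 2by − z)(xz − y²) + x³ = 0` is projectively
equivalent to the cubic `y²z = x³ + (a + b²)x²z − xz²`: there is an invertible
linear change of homogeneous coordinates carrying the first defining form to a
nonzero scalar multiple of the second. -/
theorem cubic_projectively_equivalent_to_Weierstrass (a b : ℂ) :
    ∃ M : Matrix (Fin 3) (Fin 3) ℂ, IsUnit M.det ∧
      ∃ l : ℂ, l ≠ 0 ∧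
        ∀ v : Fin 3 → ℂ,
          cubicForm a b (M.mulVec v 0) (M.mulVec v 1) (M.mulVec v 2) =
            l * ((v 1) ^ 2 * v 2 -
              ((v 0) ^ 3 + (a + b ^ 2) * (v 0) ^ 2 * v 2 - v 0 * (v 2) ^ 2)) := by
  refine ⟨!![(-1 : ℂ), 0, 0; -b, 1, 0; -(a + 2 * b ^ 2), 2 * b, 1], ?_, 1, one_ne_zero, ?_⟩
  · rw [Matrix.det_fin_three]
    simp
  · intro v
    have h0 : (!![(-1 : ℂ), 0, 0; -b, 1, 0; -(a + 2 * b ^ 2), 2 * b, 1]).mulVec v 0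
        = -v 0 := by
      simp [Matrix.mulVec, dotProduct, Fin.sum_univ_three]
    have h1 : (!![(-1 : ℂ), 0, 0; -b, 1, 0; -(a + 2 * b ^ 2), 2 * b, 1]).mulVec v 1
        = -b * v 0 + v 1 := by
      simp [Matrix.mulVec, dotProduct, Fin.sum_univ_three]
    have h2 : (!![(-1 : ℂ), 0, 0; -b, 1, 0; -(a + 2 * b ^ 2), 2 * b, 1]).mulVec v 2
        = -(a + 2 * b ^ 2) * v 0 + 2 * b * v 1 + v 2 := by
      simp [Matrix.mulVec, dotProduct, Fin.sum_univ_three]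
    rw [h0, h1, h2, cubicForm]
    ring
end
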